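/- Let r > 0, γ > 0, Θ ∈ (0, π/2), and k ∈ ℕ with k ≥ 1. Set ρ = √(rγ)/(r + γ) and A₁ = √(π/(k·r·γ))·(r + γ)^{2k+1}. Then (cos Θ)^{1/2}·erf(Θ·ρ·√(k/cos Θ)) ≤ (1/A₁)·∫_{−π}^{π} (r² + γ² + 2γr·cos θ)^k dθ ≤ (cos Θ)^{−1/2}·erf(Θ·ρ·√(k·cos Θ)) + (2(π − Θ)/A₁)·(r² + γ² + 2γr·cos Θ)^k. -/

import Mathlib

noncomputable def erf (z : ℝ) : ℝ :=
  2 / Real.sqrt Real.pi * ∫ t in (0 : ℝ)..z, Real.exp (-t ^ 2)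

/-! Writing `σ = rγ/(r+γ)²` (so `ρ² = σ ≤ 1/4`), the integrand is
`(r+γ)^{2k} (1 - 2σ(1 - cos θ))^k`. On `|θ| ≤ Θ` the elementary bounds
`cos Θ · θ²/2 ≤ 1 - cos θ ≤ θ²/2`, `1 - u ≤ e^{-u}` and `e^{-x} ≤ 1/(1+x)` trap it between the
Gaussians `(r+γ)^{2k} e^{-kσθ²/cos Θ}` and `(r+γ)^{2k} e^{-kσ cos Θ θ²}`, whose integrals over
`[-Θ, Θ]` are multiples of `erf`; dividing by `A₁` turns those multiples into `(cos Θ)^{±1/2}`.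
For the upper bound, on `Θ ≤ |θ| ≤ π` the integrand is at most its value at `Θ`. -/

open Real Set intervalIntegral

theorem Real.mul_cos_le_sin {x : ℝ} (h₀ : 0 ≤ x) (h : x < π / 2) : x * cos x ≤ sin x := by
  have hcos : 0 < cos x := cos_pos_of_mem_Ioo ⟨by linarith [pi_pos], h⟩
  have htan := le_tan h₀ h
  rwa [tan_eq_sin_div_cos, le_div_iff₀ hcos] at htan

theorem Real.cos_mul_sq_div_two_le_one_sub_cos {φ : ℝ} (hφ : |φ| < π) :
    cos φ * φ ^ 2 / 2 ≤ 1 - cos φ := by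
  set x := |φ| / 2 with hx
  have hx₀ : 0 ≤ x := by positivity
  have hsin : x * cos x ≤ sin x := mul_cos_le_sin hx₀ (by linarith)
  have hcos : 0 ≤ cos x := cos_nonneg_of_mem_Icc ⟨by linarith [pi_pos], by linarith⟩
  have hcosφ : cos φ = 2 * cos x ^ 2 - 1 := by
    rw [← cos_abs φ, ← cos_two_mul, hx]; ring_nf
  have hφ : φ ^ 2 = 4 * x ^ 2 := by rw [hx, div_pow, sq_abs]; ring
  rw [hcosφ, hφ]
  nlinarith [sin_sq_add_cos_sq x, pow_le_pow_left₀ (by positivity) hsin 2,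
    mul_nonneg (sq_nonneg x) (sq_nonneg (sin x))]

theorem Real.exp_neg_le_one_sub {x u : ℝ} (hx : 0 ≤ x) (hu : u * (1 + x) ≤ x) :
    exp (-x) ≤ 1 - u := by
  have hexp : exp (-x) * (1 + x) ≤ 1 := by
    calc exp (-x) * (1 + x) ≤ exp (-x) * exp x := by gcongr; linarith [add_one_le_exp x]
      _ = 1 := by rw [← exp_add, neg_add_cancel, exp_zero]
  have h1x : 0 < 1 + x := by linarith
  rw [← mul_le_mul_iff_of_pos_right h1x]
  linarith

theorem sq_add_sq_add_mul_cos_nonneg (r γ θ : ℝ) : 0 ≤ r ^ 2 + γ ^ 2 + 2 * γ * r * cos θ := by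
  nlinarith [sq_nonneg (r + γ * cos θ), sq_nonneg (γ * sin θ), sin_sq_add_cos_sq θ]

theorem sq_add_sq_add_mul_cos_le_of_le_abs {r γ Θ θ : ℝ} (hγr : 0 ≤ γ * r) (hΘ : 0 ≤ Θ)
    (hΘθ : Θ ≤ |θ|) (hθ : |θ| ≤ π) :
    r ^ 2 + γ ^ 2 + 2 * γ * r * cos θ ≤ r ^ 2 + γ ^ 2 + 2 * γ * r * cos Θ := by
  have hcos : cos θ ≤ cos Θ := by
    rw [← cos_abs θ]; exact cos_le_cos_of_nonneg_of_le_pi hΘ hθ hΘθ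
  nlinarith

theorem sq_add_sq_add_mul_cos_eq {r γ : ℝ} (h : r + γ ≠ 0) (θ : ℝ) :
    r ^ 2 + γ ^ 2 + 2 * γ * r * cos θ
      = (r + γ) ^ 2 * (1 - 2 * (r * γ / (r + γ) ^ 2) * (1 - cos θ)) := by
  field_simp
  ring

theorem mul_exp_le_sq_add_sq_add_mul_cos {r γ Θ θ : ℝ} (hr : 0 < r) (hγ : 0 < γ)
    (hΘ : Θ < π / 2) (hθ : |θ| ≤ Θ) :
    (r + γ) ^ 2 * exp (-(r * γ / (r + γ) ^ 2 / cos Θ * θ ^ 2))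
      ≤ r ^ 2 + γ ^ 2 + 2 * γ * r * cos θ := by
  set σ := r * γ / (r + γ) ^ 2
  have hσ₀ : 0 ≤ σ := by positivity
  have hσ : σ ≤ 1 / 4 := by
    rw [div_le_iff₀ (by positivity)]; nlinarith [sq_nonneg (r - γ)]
  have hc : 0 < cos Θ := cos_pos_of_mem_Ioo ⟨by linarith [abs_nonneg θ, pi_pos], hΘ⟩
  have hcos : cos Θ ≤ cos θ := by
    rw [← cos_abs θ]
    exact cos_le_cos_of_nonneg_of_le_pi (abs_nonneg θ) (by linarith [pi_pos]) hθ
  have hquad : 1 - cos θ ≤ θ ^ 2 / 2 := by linarith [one_sub_sq_div_two_le_cos (x := θ)]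
  rw [sq_add_sq_add_mul_cos_eq (by positivity)]
  gcongr
  apply exp_neg_le_one_sub (by positivity)
  set x := σ / cos Θ * θ ^ 2
  have hx₀ : 0 ≤ x := by positivity
  have hcx : cos Θ * x = σ * θ ^ 2 := by simp only [x]; field_simp
  have hu_cx : 2 * σ * (1 - cos θ) ≤ cos Θ * x := by
    rw [hcx]; linarith [mul_le_mul_of_nonneg_left hquad hσ₀]
  have hu_c : 2 * σ * (1 - cos θ) ≤ 1 - cos Θ := by
    linarith [mul_le_mul_of_nonneg_right hσ (sub_nonneg.2 (cos_le_one θ)), cos_le_one θ]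
  linarith [mul_le_mul_of_nonneg_right hu_c hx₀]

theorem sq_add_sq_add_mul_cos_le_mul_exp {r γ Θ θ : ℝ} (hr : 0 < r) (hγ : 0 < γ)
    (hΘ : Θ < π) (hθ : |θ| ≤ Θ) :
    r ^ 2 + γ ^ 2 + 2 * γ * r * cos θ
      ≤ (r + γ) ^ 2 * exp (-(r * γ / (r + γ) ^ 2 * cos Θ * θ ^ 2)) := by
  set σ := r * γ / (r + γ) ^ 2
  have hσ₀ : 0 ≤ σ := by positivity
  have hcos : cos Θ ≤ cos θ := by
    rw [← cos_abs θ]; exact cos_le_cos_of_nonneg_of_le_pi (abs_nonneg θ) hΘ.le hθ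
  have hquad : cos θ * θ ^ 2 / 2 ≤ 1 - cos θ :=
    cos_mul_sq_div_two_le_one_sub_cos (by linarith)
  rw [sq_add_sq_add_mul_cos_eq (by positivity)]
  gcongr
  calc 1 - 2 * σ * (1 - cos θ) ≤ exp (-(2 * σ * (1 - cos θ))) := one_sub_le_exp_neg _
    _ ≤ exp (-(σ * cos Θ * θ ^ 2)) := by
      rw [exp_le_exp, neg_le_neg_iff]
      nlinarith [mul_le_mul_of_nonneg_left hcos (mul_nonneg hσ₀ (sq_nonneg θ)),
        mul_le_mul_of_nonneg_left hquad hσ₀]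

theorem intervalIntegral.integral_even_eq_two_mul {f : ℝ → ℝ} (hf : Continuous f)
    (heven : ∀ x, f (-x) = f x) (a : ℝ) :
    ∫ x in (-a)..a, f x = 2 * ∫ x in (0 : ℝ)..a, f x := by
  have hneg : ∫ x in (-a)..0, f x = ∫ x in (0 : ℝ)..a, f x := by
    simpa [heven] using (integral_comp_neg (a := 0) (b := a) f).symm
  rw [← integral_add_adjacent_intervals (hf.intervalIntegrable _ 0) (hf.intervalIntegrable 0 _),
    hneg, two_mul]

theorem integral_exp_neg_mul_sq_eq_erf (a : ℝ) {b : ℝ} (hb : 0 < b) :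
    ∫ θ in (-a)..a, exp (-(b * θ) ^ 2) = √π / b * erf (a * b) := by
  have hg : Continuous fun t : ℝ => exp (-t ^ 2) := by fun_prop
  rw [integral_comp_mul_left (fun t => exp (-t ^ 2)) hb.ne', mul_neg,
    integral_even_eq_two_mul hg (by simp), erf, smul_eq_mul]
  have : 0 < √π := sqrt_pos.2 pi_pos
  field_simp

theorem integral_pow_mul_exp_neg_mul_sq (Θ : ℝ) {m s b : ℝ} {k : ℕ} (hb : 0 < b)
    (hbs : b ^ 2 = k * s) :
    ∫ θ in (-Θ)..Θ, (m * exp (-(s * θ ^ 2))) ^ k = m ^ k * (√π / b * erf (Θ * b)) := by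
  have hpow : ∀ θ : ℝ, (m * exp (-(s * θ ^ 2))) ^ k = m ^ k * exp (-(b * θ) ^ 2) := by
    intro θ
    rw [mul_pow, ← exp_nat_mul, mul_pow, hbs]
    ring_nf
  simp_rw [hpow]
  rw [integral_const_mul, integral_exp_neg_mul_sq_eq_erf Θ hb]

theorem le_integral_pow_of_mul_exp_le {f : ℝ → ℝ} {Θ m s b : ℝ} {k : ℕ} (hf : Continuous f)
    (hΘ : 0 ≤ Θ) (hm : 0 ≤ m) (hb : 0 < b) (hbs : b ^ 2 = k * s)
    (h : ∀ θ ∈ Icc (-Θ) Θ, m * exp (-(s * θ ^ 2)) ≤ f θ) :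
    m ^ k * (√π / b * erf (Θ * b)) ≤ ∫ θ in (-Θ)..Θ, f θ ^ k := by
  rw [← integral_pow_mul_exp_neg_mul_sq Θ hb hbs]
  exact integral_mono_on (by linarith) (by apply Continuous.intervalIntegrable; fun_prop)
    ((hf.pow k).intervalIntegrable _ _)
    fun θ hθ => pow_le_pow_left₀ (by positivity) (h θ hθ) k

theorem integral_pow_le_of_le_mul_exp {f : ℝ → ℝ} {Θ m s b : ℝ} {k : ℕ} (hf : Continuous f)
    (hΘ : 0 ≤ Θ) (hb : 0 < b) (hbs : b ^ 2 = k * s)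
    (h : ∀ θ ∈ Icc (-Θ) Θ, 0 ≤ f θ ∧ f θ ≤ m * exp (-(s * θ ^ 2))) :
    ∫ θ in (-Θ)..Θ, f θ ^ k ≤ m ^ k * (√π / b * erf (Θ * b)) := by
  rw [← integral_pow_mul_exp_neg_mul_sq Θ hb hbs]
  exact integral_mono_on (by linarith) ((hf.pow k).intervalIntegrable _ _)
    (by apply Continuous.intervalIntegrable; fun_prop)
    fun θ hθ => pow_le_pow_left₀ (h θ hθ).1 (h θ hθ).2 k

theorem integral_le_integral_add_of_le_on_tails {f : ℝ → ℝ} {a Θ M : ℝ} (hf : Continuous f)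
    (hΘ : 0 ≤ Θ) (hΘa : Θ ≤ a) (htail : ∀ θ, Θ ≤ |θ| → |θ| ≤ a → f θ ≤ M) :
    ∫ θ in (-a)..a, f θ ≤ (∫ θ in (-Θ)..Θ, f θ) + 2 * (a - Θ) * M := by
  have hint : ∀ x y, IntervalIntegrable f MeasureTheory.volume x y :=
    fun x y => hf.intervalIntegrable x y
  have hleft : ∫ θ in (-a)..(-Θ), f θ ≤ (a - Θ) * M := by
    calc ∫ θ in (-a)..(-Θ), f θ ≤ ∫ _ in (-a)..(-Θ), M :=
          integral_mono_on (by linarith) (hint _ _) intervalIntegrable_const fun θ hθ =>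
            htail θ (by rw [abs_of_nonpos (by linarith [hθ.2])]; linarith [hθ.2])
              (by rw [abs_of_nonpos (by linarith [hθ.2])]; linarith [hθ.1])
      _ = (a - Θ) * M := by rw [integral_const, smul_eq_mul]; ring
  have hright : ∫ θ in Θ..a, f θ ≤ (a - Θ) * M := by
    calc ∫ θ in Θ..a, f θ ≤ ∫ _ in Θ..a, M :=
          integral_mono_on hΘa (hint _ _) intervalIntegrable_const fun θ hθ =>
            htail θ (by rw [abs_of_nonneg (by linarith [hθ.1])]; exact hθ.1)
              (by rw [abs_of_nonneg (by linarith [hθ.1])]; exact hθ.2)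
      _ = (a - Θ) * M := by rw [integral_const, smul_eq_mul]
  have hsplit : ∫ θ in (-a)..a, f θ
      = (∫ θ in (-a)..(-Θ), f θ) + (∫ θ in (-Θ)..Θ, f θ) + ∫ θ in Θ..a, f θ := by
    rw [integral_add_adjacent_intervals (hint _ _) (hint _ _),
      integral_add_adjacent_intervals (hint _ _) (hint _ _)]
  linarith

theorem one_div_mul_sqrt_pi_div_eq {r γ t : ℝ} (hr : 0 < r) (hγ : 0 < γ) (ht : 0 < t) {k : ℕ}
    (hk : 1 ≤ k) :
    1 / (√(π / (k * r * γ)) * (r + γ) ^ (2 * k + 1)) *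
        (((r + γ) ^ 2) ^ k * (√π / (√(r * γ) / (r + γ) * √(k * t)))) = (√t)⁻¹ := by
  have hk0 : (0 : ℝ) < k := by exact_mod_cast hk
  rw [← pow_mul, mul_assoc (k : ℝ) r γ, sqrt_div pi_pos.le, sqrt_mul hk0.le, sqrt_mul hk0.le]
  have : 0 < √π := sqrt_pos.2 pi_pos
  have : 0 < √k := sqrt_pos.2 hk0
  have : 0 < √(r * γ) := sqrt_pos.2 (by positivity)
  have : 0 < √t := sqrt_pos.2 ht
  field_simp
  ring

theorem sqrt_div_add_mul_sqrt_sq {r γ t : ℝ} (hrγ : 0 ≤ r * γ) (k : ℕ) (ht : 0 ≤ t) :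
    (√(r * γ) / (r + γ) * √(k * t)) ^ 2 = k * (r * γ / (r + γ) ^ 2 * t) := by
  rw [mul_pow, div_pow, sq_sqrt hrγ, sq_sqrt (by positivity)]
  ring

theorem sqrt_cos_mul_erf_le_integral {r γ Θ : ℝ} (hr : 0 < r) (hγ : 0 < γ) (hΘ₀ : 0 < Θ)
    (hΘ : Θ < π / 2) {k : ℕ} (hk : 1 ≤ k) :
    √(cos Θ) * erf (Θ * (√(r * γ) / (r + γ)) * √(k / cos Θ))
      ≤ 1 / (√(π / (k * r * γ)) * (r + γ) ^ (2 * k + 1)) *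
        ∫ θ in (-Θ)..Θ, (r ^ 2 + γ ^ 2 + 2 * γ * r * cos θ) ^ k := by
  have hc : 0 < cos Θ := cos_pos_of_mem_Ioo ⟨by linarith, hΘ⟩
  rw [mul_assoc Θ, div_eq_mul_inv (k : ℝ)]
  set A := √(π / (k * r * γ)) * (r + γ) ^ (2 * k + 1)
  set b := √(r * γ) / (r + γ) * √(k * (cos Θ)⁻¹)
  have hscale : 1 / A * (((r + γ) ^ 2) ^ k * (√π / b)) = √(cos Θ) := by
    rw [one_div_mul_sqrt_pi_div_eq hr hγ (inv_pos.2 hc) hk, sqrt_inv, inv_inv]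
  calc √(cos Θ) * erf (Θ * b) = 1 / A * (((r + γ) ^ 2) ^ k * (√π / b * erf (Θ * b))) := by
        rw [← hscale]; ring
    _ ≤ 1 / A * ∫ θ in (-Θ)..Θ, (r ^ 2 + γ ^ 2 + 2 * γ * r * cos θ) ^ k := by
        gcongr
        exact le_integral_pow_of_mul_exp_le (by fun_prop) hΘ₀.le (by positivity) (by positivity)
          (sqrt_div_add_mul_sqrt_sq (by positivity) k (by positivity))
          fun θ hθ => mul_exp_le_sq_add_sq_add_mul_cos hr hγ hΘ (abs_le.2 hθ)

theorem integral_le_inv_sqrt_cos_mul_erf {r γ Θ : ℝ} (hr : 0 < r) (hγ : 0 < γ) (hΘ₀ : 0 < Θ)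
    (hΘ : Θ < π / 2) {k : ℕ} (hk : 1 ≤ k) :
    1 / (√(π / (k * r * γ)) * (r + γ) ^ (2 * k + 1)) *
        ∫ θ in (-Θ)..Θ, (r ^ 2 + γ ^ 2 + 2 * γ * r * cos θ) ^ k
      ≤ (√(cos Θ))⁻¹ * erf (Θ * (√(r * γ) / (r + γ)) * √(k * cos Θ)) := by
  have hc : 0 < cos Θ := cos_pos_of_mem_Ioo ⟨by linarith, hΘ⟩
  rw [mul_assoc Θ]
  set A := √(π / (k * r * γ)) * (r + γ) ^ (2 * k + 1)
  set b := √(r * γ) / (r + γ) * √(k * cos Θ)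
  have hscale : 1 / A * (((r + γ) ^ 2) ^ k * (√π / b)) = (√(cos Θ))⁻¹ :=
    one_div_mul_sqrt_pi_div_eq hr hγ hc hk
  calc 1 / A * ∫ θ in (-Θ)..Θ, (r ^ 2 + γ ^ 2 + 2 * γ * r * cos θ) ^ k
      ≤ 1 / A * (((r + γ) ^ 2) ^ k * (√π / b * erf (Θ * b))) := by
        gcongr
        exact integral_pow_le_of_le_mul_exp (by fun_prop) hΘ₀.le (by positivity)
          (sqrt_div_add_mul_sqrt_sq (by positivity) k hc.le) fun θ hθ =>
            ⟨sq_add_sq_add_mul_cos_nonneg r γ θ,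
              sq_add_sq_add_mul_cos_le_mul_exp hr hγ (by linarith) (abs_le.2 hθ)⟩
    _ = (√(cos Θ))⁻¹ * erf (Θ * b) := by rw [← hscale]; ring

/-- Laplace-method bounds for the `θ`-integral: with `ρ = √(rγ)/(r+γ)` and
`A₁ = √(π/(k r γ)) (r+γ)^{2k+1}`, for `Θ ∈ (0, π/2)` and `k ≥ 1`,
`(cos Θ)^{1/2} erf(Θρ√(k/cos Θ)) ≤ (1/A₁) ∫_{-π}^π (r²+γ²+2γr cos θ)^k dθ
  ≤ (cos Θ)^{-1/2} erf(Θρ√(k cos Θ)) + (2(π-Θ)/A₁)(r²+γ²+2γr cos Θ)^k`. -/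
theorem theta_integral_laplace_bounds (r γ Θ : ℝ) (hr : 0 < r) (hγ : 0 < γ)
    (hΘ : Θ ∈ Set.Ioo 0 (Real.pi / 2)) (k : ℕ) (hk : 1 ≤ k) :
    Real.sqrt (Real.cos Θ) *
        erf (Θ * (Real.sqrt (r * γ) / (r + γ)) * Real.sqrt (k / Real.cos Θ)) ≤
      1 / (Real.sqrt (Real.pi / (k * r * γ)) * (r + γ) ^ (2 * k + 1)) *
        ∫ θ in (-Real.pi)..Real.pi, (r ^ 2 + γ ^ 2 + 2 * γ * r * Real.cos θ) ^ k ∧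
    1 / (Real.sqrt (Real.pi / (k * r * γ)) * (r + γ) ^ (2 * k + 1)) *
        (∫ θ in (-Real.pi)..Real.pi, (r ^ 2 + γ ^ 2 + 2 * γ * r * Real.cos θ) ^ k) ≤
      (Real.sqrt (Real.cos Θ))⁻¹ *
          erf (Θ * (Real.sqrt (r * γ) / (r + γ)) * Real.sqrt (k * Real.cos Θ)) +
        2 * (Real.pi - Θ) / (Real.sqrt (Real.pi / (k * r * γ)) * (r + γ) ^ (2 * k + 1)) *
          (r ^ 2 + γ ^ 2 + 2 * γ * r * Real.cos Θ) ^ k := by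
  obtain ⟨hΘ₀, hΘ⟩ := hΘ
  have hP : Continuous fun θ => r ^ 2 + γ ^ 2 + 2 * γ * r * cos θ := by fun_prop
  set A := √(π / (k * r * γ)) * (r + γ) ^ (2 * k + 1)
  constructor
  · calc _ ≤ 1 / A * ∫ θ in (-Θ)..Θ, (r ^ 2 + γ ^ 2 + 2 * γ * r * cos θ) ^ k :=
          sqrt_cos_mul_erf_le_integral hr hγ hΘ₀ hΘ hk
      _ ≤ _ := by
          gcongr
          exact integral_mono_interval (by linarith) (by linarith) (by linarith)
            (.of_forall fun θ => pow_nonneg (sq_add_sq_add_mul_cos_nonneg r γ θ) k)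
            ((hP.pow k).intervalIntegrable _ _)
  · calc _ ≤ 1 / A * ((∫ θ in (-Θ)..Θ, (r ^ 2 + γ ^ 2 + 2 * γ * r * cos θ) ^ k)
            + 2 * (π - Θ) * (r ^ 2 + γ ^ 2 + 2 * γ * r * cos Θ) ^ k) := by
          gcongr
          exact integral_le_integral_add_of_le_on_tails (hP.pow k) hΘ₀.le (by linarith)
            fun θ hΘθ hθ => pow_le_pow_left₀ (sq_add_sq_add_mul_cos_nonneg r γ θ)
              (sq_add_sq_add_mul_cos_le_of_le_abs (by positivity) hΘ₀.le hΘθ hθ) k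
      _ = 1 / A * (∫ θ in (-Θ)..Θ, (r ^ 2 + γ ^ 2 + 2 * γ * r * cos θ) ^ k)
            + 2 * (π - Θ) / A * (r ^ 2 + γ ^ 2 + 2 * γ * r * cos Θ) ^ k := by ring
      _ ≤ _ := add_le_add_left (integral_le_inv_sqrt_cos_mul_erf hr hγ hΘ₀ hΘ hk) _
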